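/- Let n ≥ 1, let K ⊆ ℝⁿ be a nonempty closed set, and let s = (s_α)_{α∈ℕ₀ⁿ} be a K^♯-moment sequence, where K^♯ := {x ∈ ℝⁿ : x + K ⊆ K}. Then the linear map D(s) : ℝ[x₁,…,xₙ] → ℝ[x₁,…,xₙ], D(s)p = Σ_α (s_α/α!)·∂^α p, maps Pos(K) into Pos(K). -/

import Mathlib

open MeasureTheory MvPolynomial Filter Topology

/-- The iterated partial derivative `∂^α` on `ℝ[x₁,…,xₙ]`. -/
noncomputable def pd (n : ℕ) (α : Fin n →₀ ℕ) :
    MvPolynomial (Fin n) ℝ →ₗ[ℝ] MvPolynomial (Fin n) ℝ :=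
  (List.ofFn (fun i : Fin n =>
    (((MvPolynomial.pderiv i).toLinearMap : Module.End ℝ (MvPolynomial (Fin n) ℝ)) ^ (α i)))).prod

/-- The multi-factorial `α! = α₁!⋯αₙ!`. -/
def mfact (n : ℕ) (α : Fin n →₀ ℕ) : ℕ := ∏ i, Nat.factorial (α i)

/-- The monomial function `x ↦ x^α`. -/
def monomialFn (n : ℕ) (α : Fin n →₀ ℕ) : (Fin n → ℝ) → ℝ := fun x => ∏ i, x i ^ α i

/-- `s` is a `K`-moment sequence: there is a measure supported in `K` whose moments are `s`. -/
def IsMomentSeqOn (n : ℕ) (K : Set (Fin n → ℝ)) (s : (Fin n →₀ ℕ) → ℝ) : Prop :=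
  ∃ μ : Measure (Fin n → ℝ), μ Kᶜ = 0 ∧
    ∀ α : Fin n →₀ ℕ, Integrable (monomialFn n α) μ ∧ (∫ x, monomialFn n α x ∂μ) = s α

/-- `Pos(K)`, the polynomials nonnegative on `K`. -/
def PosOn (n : ℕ) (K : Set (Fin n → ℝ)) : Set (MvPolynomial (Fin n) ℝ) :=
  {f | ∀ x ∈ K, 0 ≤ MvPolynomial.eval x f}

/-- The operator `T = Σ_α q_α ∂^α` applied to `p` (the sum is finite since `∂^α p = 0`
for `|α| > deg p`). -/
noncomputable def applyOp (n : ℕ) (q : (Fin n →₀ ℕ) → MvPolynomial (Fin n) ℝ)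
    (p : MvPolynomial (Fin n) ℝ) : MvPolynomial (Fin n) ℝ :=
  ∑ᶠ α : Fin n →₀ ℕ, q α * pd n α p

/-- `K^♯ = {x : x + K ⊆ K}`. -/
def Ksharp (n : ℕ) (K : Set (Fin n → ℝ)) : Set (Fin n → ℝ) :=
  {x | ∀ y ∈ K, x + y ∈ K}

/-- `D(s) = Σ_α (s_α/α!) ∂^α` applied to `p`. -/
noncomputable def applyD (n : ℕ) (s : (Fin n →₀ ℕ) → ℝ) (p : MvPolynomial (Fin n) ℝ) :
    MvPolynomial (Fin n) ℝ :=
  ∑ᶠ α : Fin n →₀ ℕ, (s α / (mfact n α : ℝ)) • pd n α p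

/-- The exponential of an endomorphism of a finite-dimensional real vector space,
defined via the matrix exponential in a basis. -/
noncomputable def expEnd {M : Type*} [AddCommGroup M] [Module ℝ M] [FiniteDimensional ℝ M]
    (f : M →ₗ[ℝ] M) : M →ₗ[ℝ] M :=
  letI : DecidableEq (Module.Basis.ofVectorSpaceIndex ℝ M) := Classical.decEq _
  (Matrix.toLin (Module.Basis.ofVectorSpace ℝ M) (Module.Basis.ofVectorSpace ℝ M))
    (NormedSpace.exp
      ((LinearMap.toMatrix (Module.Basis.ofVectorSpace ℝ M) (Module.Basis.ofVectorSpace ℝ M)) f))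

/-!
Taylor's formula `f (x + y) = ∑_α ∂^α f (y) / α! · x^α` turns `D(s) f (y)` into
`∫ f (x + y) dμ(x)` for a measure `μ` representing `s`. When `μ` lives on `K^♯` and `y ∈ K`,
the integrand is nonnegative `μ`-almost everywhere.
-/

section Taylor

variable {n : ℕ}

lemma pderiv_pow_monomial (i : Fin n) (k : ℕ) (β : Fin n →₀ ℕ) (c : ℝ) :
    (((pderiv i).toLinearMap : Module.End ℝ (MvPolynomial (Fin n) ℝ)) ^ k) (monomial β c)
      = monomial (β - Finsupp.single i k) (c * ((β i).descFactorial k : ℝ)) := by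
  induction k with
  | zero => simp
  | succ k ih =>
    rw [pow_succ', Module.End.mul_apply, ih]
    simp only [Derivation.coeFn_coe, pderiv_monomial]
    congr 1
    · rw [tsub_tsub, ← Finsupp.single_add]
    · rw [Finsupp.tsub_apply, Finsupp.single_eq_same, Nat.descFactorial_succ]
      push_cast
      ring

lemma list_prod_pderiv_pow_monomial (α β : Fin n →₀ ℕ) (c : ℝ) {l : List (Fin n)}
    (hl : l.Nodup) :
    (l.map fun i =>
        ((pderiv i).toLinearMap : Module.End ℝ (MvPolynomial (Fin n) ℝ)) ^ α i).prod
        (monomial β c)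
      = monomial (β - ∑ i ∈ l.toFinset, Finsupp.single i (α i))
          (c * ∏ i ∈ l.toFinset, ((β i).descFactorial (α i) : ℝ)) := by
  induction l with
  | nil => simp
  | cons i t ih =>
    obtain ⟨hit, ht⟩ := List.nodup_cons.mp hl
    have hit' : i ∉ t.toFinset := by simpa using hit
    -- the derivatives in the variables of `t` leave the exponent of `x i` untouched
    have hβi : (β - ∑ j ∈ t.toFinset, Finsupp.single j (α j)) i = β i := by
      rw [Finsupp.tsub_apply, Finsupp.finsetSum_apply,
        Finset.sum_eq_zero fun j hj => Finsupp.single_eq_of_ne' (ne_of_mem_of_not_mem hj hit'),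
        Nat.sub_zero]
    rw [List.map_cons, List.prod_cons, Module.End.mul_apply, ih ht, pderiv_pow_monomial, hβi,
      List.toFinset_cons, Finset.sum_insert hit', Finset.prod_insert hit', tsub_tsub, add_comm,
      mul_assoc, mul_comm (∏ i ∈ t.toFinset, _)]

lemma pd_monomial (α β : Fin n →₀ ℕ) (c : ℝ) :
    pd n α (monomial β c) = monomial (β - α) (c * ∏ i, ((β i).descFactorial (α i) : ℝ)) := by
  rw [pd, List.ofFn_eq_map, list_prod_pderiv_pow_monomial α β c (List.nodup_finRange n),
    List.toFinset_finRange, Finsupp.univ_sum_single]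

lemma pd_monomial_of_not_le {α β : Fin n →₀ ℕ} (c : ℝ) (h : ¬ α ≤ β) :
    pd n α (monomial β c) = 0 := by
  obtain ⟨i, hi⟩ : ∃ i, β i < α i := by simpa [Finsupp.le_def] using h
  rw [pd_monomial, Finset.prod_eq_zero (Finset.mem_univ i)
    (by rw [Nat.descFactorial_eq_zero_iff_lt.mpr hi, Nat.cast_zero]), mul_zero, monomial_zero]

lemma mfact_ne_zero (α : Fin n →₀ ℕ) : (mfact n α : ℝ) ≠ 0 :=
  Nat.cast_ne_zero.mpr (Finset.prod_ne_zero_iff.mpr fun _ _ => Nat.factorial_ne_zero _)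

lemma prod_descFactorial_eq_mfact_mul (α β : Fin n →₀ ℕ) :
    ∏ i, ((β i).descFactorial (α i) : ℝ) = mfact n α * ∏ i, ((β i).choose (α i) : ℝ) := by
  rw [mfact, Nat.cast_prod, ← Finset.prod_mul_distrib]
  exact Finset.prod_congr rfl fun i _ => mod_cast Nat.descFactorial_eq_factorial_mul_choose _ _

lemma eval_pd_monomial_div_mfact_mul_monomialFn {α β : Fin n →₀ ℕ} (c : ℝ) (x y : Fin n → ℝ) :
    eval y (pd n α (monomial β c)) / mfact n α * monomialFn n α x
      = c * ∏ i, (x i ^ α i * y i ^ (β i - α i) * ((β i).choose (α i) : ℝ)) := by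
  have hα := mfact_ne_zero α
  simp only [pd_monomial, eval_monomial, Finsupp.prod_pow, Finsupp.tsub_apply, monomialFn,
    prod_descFactorial_eq_mfact_mul, Finset.prod_mul_distrib]
  field_simp

lemma eval_add_monomial (β : Fin n →₀ ℕ) (c : ℝ) (x y : Fin n → ℝ) :
    eval (x + y) (monomial β c)
      = ∑ α ∈ Finset.Iic β, eval y (pd n α (monomial β c)) / mfact n α * monomialFn n α x := by
  have hbinom : ∏ i, (x i + y i) ^ β i = ∑ p ∈ Fintype.piFinset fun i => Finset.range (β i + 1),
      ∏ i, (x i ^ p i * y i ^ (β i - p i) * ((β i).choose (p i) : ℝ)) := by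
    simp only [add_pow, Finset.prod_univ_sum]
  rw [eval_monomial, Finsupp.prod_pow, Pi.add_def, hbinom, Finset.mul_sum]
  refine (Finset.sum_nbij' (fun α : Fin n →₀ ℕ => ⇑α) Finsupp.equivFunOnFinite.symm
    ?_ ?_ ?_ ?_ ?_).symm
  · intro α hα
    simpa [Nat.lt_succ_iff, Finsupp.le_def] using hα
  · intro p hp
    simpa [Nat.lt_succ_iff, Finsupp.le_def] using hp
  · intro α _
    simp
  · intro p _
    exact Finsupp.equivFunOnFinite.apply_symm_apply p
  · intro α _
    exact eval_pd_monomial_div_mfact_mul_monomialFn c x y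

/-- The multi-indices `α` with `∂^α f ≠ 0` all lie below an exponent of `f`. -/
noncomputable def derivSupport (f : MvPolynomial (Fin n) ℝ) : Finset (Fin n →₀ ℕ) :=
  f.support.biUnion Finset.Iic

lemma pd_eq_zero_of_notMem_derivSupport {f : MvPolynomial (Fin n) ℝ} {α : Fin n →₀ ℕ}
    (h : α ∉ derivSupport f) : pd n α f = 0 := by
  rw [f.as_sum, map_sum]
  refine Finset.sum_eq_zero fun β hβ => pd_monomial_of_not_le _ fun hle => h ?_
  exact Finset.mem_biUnion.mpr ⟨β, hβ, Finset.mem_Iic.mpr hle⟩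

theorem eval_add_eq_sum (f : MvPolynomial (Fin n) ℝ) (x y : Fin n → ℝ) :
    eval (x + y) f
      = ∑ α ∈ derivSupport f, eval y (pd n α f) / mfact n α * monomialFn n α x := by
  have hterm : ∀ β ∈ f.support, eval (x + y) (monomial β (coeff β f))
      = ∑ α ∈ derivSupport f,
          eval y (pd n α (monomial β (coeff β f))) / mfact n α * monomialFn n α x := by
    intro β hβ
    rw [eval_add_monomial]
    refine Finset.sum_subset (Finset.subset_biUnion_of_mem _ hβ) fun α _ hα => ?_
    rw [pd_monomial_of_not_le _ fun hle => hα (Finset.mem_Iic.mpr hle), map_zero, zero_div,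
      zero_mul]
  conv_lhs => rw [f.as_sum]
  conv_rhs => enter [2, α]; rw [f.as_sum]
  simp only [map_sum, Finset.sum_div, Finset.sum_mul]
  rw [Finset.sum_congr rfl hterm, Finset.sum_comm]

lemma applyD_eq_sum (s : (Fin n →₀ ℕ) → ℝ) (f : MvPolynomial (Fin n) ℝ) :
    applyD n s f = ∑ α ∈ derivSupport f, (s α / mfact n α) • pd n α f := by
  refine finsum_eq_sum_of_support_subset _ (Function.support_subset_iff'.mpr fun α hα => ?_)
  rw [pd_eq_zero_of_notMem_derivSupport hα, smul_zero]

theorem eval_applyD_eq_integral {s : (Fin n →₀ ℕ) → ℝ} {μ : Measure (Fin n → ℝ)}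
    (hmom : ∀ α, Integrable (monomialFn n α) μ ∧ ∫ x, monomialFn n α x ∂μ = s α)
    (f : MvPolynomial (Fin n) ℝ) (y : Fin n → ℝ) :
    eval y (applyD n s f) = ∫ x, eval (x + y) f ∂μ := by
  simp_rw [eval_add_eq_sum f _ y]
  rw [integral_finsetSum _ fun α _ => (hmom α).1.const_mul _, applyD_eq_sum, map_sum]
  refine Finset.sum_congr rfl fun α _ => ?_
  rw [smul_eval, integral_const_mul, (hmom α).2]
  ring

end Taylor

theorem stmt7_general (n : ℕ) (K : Set (Fin n → ℝ)) (s : (Fin n →₀ ℕ) → ℝ)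
    (hs : IsMomentSeqOn n (Ksharp n K) s) :
    ∀ f ∈ PosOn n K, applyD n s f ∈ PosOn n K := by
  obtain ⟨μ, hμ, hmom⟩ := hs
  intro f hf y hy
  rw [eval_applyD_eq_integral hmom]
  refine integral_nonneg_of_ae ?_
  filter_upwards [mem_ae_iff.mpr hμ] with x hx
  exact hf (x + y) (hx y hy)

/-- if `s` is a `K^♯`-moment sequence then `D(s)` is a `K`-positivity
preserver. -/
theorem stmt7 (n : ℕ) (hn : 1 ≤ n) (K : Set (Fin n → ℝ)) (hKne : K.Nonempty)
    (hKcl : IsClosed K) (s : (Fin n →₀ ℕ) → ℝ)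
    (hs : IsMomentSeqOn n (Ksharp n K) s) :
    ∀ f ∈ PosOn n K, applyD n s f ∈ PosOn n K :=
  stmt7_general n K s hs
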